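/- Let Ψ_h be a finite-dimensional space of piecewise polynomial functions on a conforming quasi-uniform triangulation 𝒢_h of a surface Γ, with zero mean over Γ. Suppose every φ ∈ Ψ_h satisfies (i) |φ|²_{1/2,𝒢_h} ≤ C ‖curl_h φ‖²_{-1/2,Γ} and (ii) the bilinear form d(ψ,φ) = ⟨V curl_h ψ, curl_h φ⟩ + ⟨Tψ, ⟦φ⟧⟩ − ⟨⟦ψ⟧, Tφ⟩ + ⟨ν⟦ψ⟧, ⟦φ⟧⟩ with V coercive on H^{-1/2}(Γ) and ν ≥ ν₀ > 0. Then d(φ,φ) ≥ c ( |φ|²_{1/2,𝒢_h} + ‖⟦φ⟧‖²_{0,ℰ_h} ) for all φ ∈ Ψ_h, and consequently d(φ,φ) = 0 implies φ is constant on Γ, hence φ = 0 by the zero-mean condition. -/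

import Mathlib

/-!
In the quadratic form `d(φ,φ)` the two `T`-terms are `⟪Tφ, ⟦φ⟧⟫ - ⟪⟦φ⟧, Tφ⟫ = 0`, so
`d(φ,φ) = ⟪V curl_h φ, curl_h φ⟫ + ⟪ν⟦φ⟧, ⟦φ⟧⟫ ≥ C₀ ‖curl_h φ‖² + ν₀ ‖⟦φ⟧‖²`.
The broken-seminorm bound trades `‖curl_h φ‖²` for `|φ|²_{1/2,𝒢_h} / Ceq`, giving ellipticity
with `c = min (C₀ / Ceq) ν₀`. If `d(φ,φ) = 0` both the broken curl and the jumps vanish,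
so `φ` is constant, hence zero.
-/

section DGForm

variable {X H J : Type*} [AddCommGroup X] [Module ℝ X]
  [NormedAddCommGroup H] [InnerProductSpace ℝ H] [NormedAddCommGroup J] [InnerProductSpace ℝ J]

noncomputable def dgForm (V : H →L[ℝ] H →L[ℝ] ℝ) (curlh : X →ₗ[ℝ] H) (jump T : X →ₗ[ℝ] J)
    (N : J →ₗ[ℝ] J) (ψ φ : X) : ℝ :=
  V (curlh ψ) (curlh φ) + inner ℝ (T ψ) (jump φ) - inner ℝ (jump ψ) (T φ)
    + inner ℝ (N (jump ψ)) (jump φ)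

theorem dgForm_self (V : H →L[ℝ] H →L[ℝ] ℝ) (curlh : X →ₗ[ℝ] H) (jump T : X →ₗ[ℝ] J)
    (N : J →ₗ[ℝ] J) (φ : X) :
    dgForm V curlh jump T N φ φ = V (curlh φ) (curlh φ) + inner ℝ (N (jump φ)) (jump φ) := by
  rw [dgForm, real_inner_comm (jump φ) (T φ)]
  ring

theorem mul_norm_sq_add_mul_norm_sq_le_dgForm_self {V : H →L[ℝ] H →L[ℝ] ℝ} {C₀ : ℝ}
    (hcoer : ∀ η : H, C₀ * ‖η‖ ^ 2 ≤ V η η) {N : J →ₗ[ℝ] J} {ν₀ : ℝ}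
    (hN : ∀ j : J, ν₀ * ‖j‖ ^ 2 ≤ inner ℝ (N j) j) (curlh : X →ₗ[ℝ] H) (jump T : X →ₗ[ℝ] J)
    (φ : X) :
    C₀ * ‖curlh φ‖ ^ 2 + ν₀ * ‖jump φ‖ ^ 2 ≤ dgForm V curlh jump T N φ φ := by
  rw [dgForm_self]
  exact add_le_add (hcoer _) (hN _)

end DGForm

theorem min_div_mul_add_le {C₀ Ceq ν p q r : ℝ} (hC₀ : 0 < C₀) (hCeq : 0 < Ceq)
    (hp : 0 ≤ p) (hr : 0 ≤ r) (hpq : p ≤ Ceq * q) :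
    min (C₀ / Ceq) ν * (p + r) ≤ C₀ * q + ν * r := by
  have hp_le : min (C₀ / Ceq) ν * p ≤ C₀ * q :=
    calc min (C₀ / Ceq) ν * p ≤ C₀ / Ceq * p := by gcongr; exact min_le_left _ _
      _ ≤ C₀ / Ceq * (Ceq * q) := by gcongr
      _ = C₀ * q := by field_simp
  have hr_le : min (C₀ / Ceq) ν * r ≤ ν * r := by gcongr; exact min_le_right _ _
  linarith

theorem eq_zero_and_eq_zero_of_mul_norm_sq_add_le_zero {E F : Type*} [NormedAddCommGroup E]
    [NormedAddCommGroup F] {a b : ℝ} (ha : 0 < a) (hb : 0 < b) {x : E} {y : F}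
    (h : a * ‖x‖ ^ 2 + b * ‖y‖ ^ 2 ≤ 0) : x = 0 ∧ y = 0 := by
  have hx : 0 ≤ a * ‖x‖ ^ 2 := by positivity
  have hy : 0 ≤ b * ‖y‖ ^ 2 := by positivity
  constructor
  · simpa [ha.ne'] using (show a * ‖x‖ ^ 2 = 0 by linarith)
  · simpa [hb.ne'] using (show b * ‖y‖ ^ 2 = 0 by linarith)

theorem stmt_14_general {X H J : Type*}
    [AddCommGroup X] [Module ℝ X]
    [NormedAddCommGroup H] [InnerProductSpace ℝ H]
    [NormedAddCommGroup J] [InnerProductSpace ℝ J]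
    (V : H →L[ℝ] H →L[ℝ] ℝ) (C₀ : ℝ) (hC₀ : 0 < C₀)
    (hcoer : ∀ η : H, C₀ * ‖η‖ ^ 2 ≤ V η η)
    (curlh : X →ₗ[ℝ] H) (jump : X →ₗ[ℝ] J) (T : X →ₗ[ℝ] J)
    (N : J →ₗ[ℝ] J) (ν₀ : ℝ) (hν₀ : 0 < ν₀)
    (hN : ∀ j : J, ν₀ * ‖j‖ ^ 2 ≤ inner ℝ (N j) j)
    (semi : X → ℝ)
    (Ceq : ℝ) (hCeq : 0 < Ceq)
    -- broken-seminorm equivalence (eqnorm)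
    (heq : ∀ φ : X, (semi φ) ^ 2 ≤ Ceq * ‖curlh φ‖ ^ 2)
    -- zero-mean rigidity: curl-free, jump-free functions are constants of zero mean
    (hker : ∀ φ : X, curlh φ = 0 → jump φ = 0 → φ = 0)
    (d : X → X → ℝ)
    (hd : ∀ ψ φ : X, d ψ φ = V (curlh ψ) (curlh φ)
      + inner ℝ (T ψ) (jump φ) - inner ℝ (jump ψ) (T φ) + inner ℝ (N (jump ψ)) (jump φ)) :
    (∃ c > 0, ∀ φ : X, c * ((semi φ) ^ 2 + ‖jump φ‖ ^ 2) ≤ d φ φ)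
      ∧ ∀ φ : X, d φ φ = 0 → φ = 0 := by
  have hd_eq : d = dgForm V curlh jump T N := by
    ext ψ φ
    exact hd ψ φ
  have key : ∀ φ, C₀ * ‖curlh φ‖ ^ 2 + ν₀ * ‖jump φ‖ ^ 2 ≤ d φ φ := fun φ => by
    rw [hd_eq]
    exact mul_norm_sq_add_mul_norm_sq_le_dgForm_self hcoer hN curlh jump T φ
  refine ⟨⟨min (C₀ / Ceq) ν₀, lt_min (div_pos hC₀ hCeq) hν₀, fun φ => ?_⟩, fun φ hφ => ?_⟩
  · exact (min_div_mul_add_le hC₀ hCeq (sq_nonneg _) (sq_nonneg _) (heq φ)).trans (key φ)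
  · obtain ⟨hcurl, hjump⟩ :=
      eq_zero_and_eq_zero_of_mul_norm_sq_add_le_zero hC₀ hν₀ (hφ ▸ key φ)
    exact hker φ hcurl hjump

/-- Ellipticity of the DG-BEM bilinear form `d` on the discontinuous boundary element
space `Ψ_h` (Section 3, used in Proposition 3.1).  `X` stands for the zero-mean space
`Ψ_h` (finite dimensional), `H` for `H^{-1/2}(Γ)³` with `V` the coercive single layer
operator, `curlh` the elementwise surface curl, `J` for `L²(ℰ_h)` with `jump` the
edge-jump operator, `T` the operator of (d), `N` multiplication by `ν ≥ ν₀ > 0`, and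
`semi φ = |φ|_{1/2,𝒢_h}` satisfies the broken-seminorm bound (eqnorm)
`(semi φ)² ≤ Ceq ‖curl_h φ‖²`.  Functions with vanishing broken curl and vanishing
jumps are constant, hence zero by the zero-mean condition (hypothesis `hker`).  Then
`d(φ,φ) ≥ c (|φ|²_{1/2,𝒢_h} + ‖⟦φ⟧‖²_{0,ℰ_h})` for some `c > 0`, and consequently
`d(φ,φ) = 0` implies `φ = 0`. -/
theorem stmt_14 {X H J : Type*}
    [AddCommGroup X] [Module ℝ X] [FiniteDimensional ℝ X]
    [NormedAddCommGroup H] [InnerProductSpace ℝ H] [CompleteSpace H]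
    [NormedAddCommGroup J] [InnerProductSpace ℝ J] [CompleteSpace J]
    (V : H →L[ℝ] H →L[ℝ] ℝ) (C₀ : ℝ) (hC₀ : 0 < C₀)
    (hcoer : ∀ η : H, C₀ * ‖η‖ ^ 2 ≤ V η η)
    (curlh : X →ₗ[ℝ] H) (jump : X →ₗ[ℝ] J) (T : X →ₗ[ℝ] J)
    (N : J →ₗ[ℝ] J) (ν₀ : ℝ) (hν₀ : 0 < ν₀)
    (hN : ∀ j : J, ν₀ * ‖j‖ ^ 2 ≤ inner ℝ (N j) j)
    (semi : X → ℝ) (hsemi : ∀ φ, 0 ≤ semi φ)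
    (Ceq : ℝ) (hCeq : 0 < Ceq)
    -- broken-seminorm equivalence (eqnorm)
    (heq : ∀ φ : X, (semi φ) ^ 2 ≤ Ceq * ‖curlh φ‖ ^ 2)
    -- zero-mean rigidity: curl-free, jump-free functions are constants of zero mean
    (hker : ∀ φ : X, curlh φ = 0 → jump φ = 0 → φ = 0)
    (d : X → X → ℝ)
    (hd : ∀ ψ φ : X, d ψ φ = V (curlh ψ) (curlh φ)
      + inner ℝ (T ψ) (jump φ) - inner ℝ (jump ψ) (T φ) + inner ℝ (N (jump ψ)) (jump φ)) :
    (∃ c > 0, ∀ φ : X, c * ((semi φ) ^ 2 + ‖jump φ‖ ^ 2) ≤ d φ φ)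
      ∧ ∀ φ : X, d φ φ = 0 → φ = 0 :=
  stmt_14_general V C₀ hC₀ hcoer curlh jump T N ν₀ hν₀ hN semi Ceq hCeq heq hker d hd
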